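/- Let a,b,A,B ∈ ℕ with b > 0, B > 0, gcd(a,b) = 1, let h,k ∈ ℕ with k > 0, gcd(h,k) = 1, and suppose b | k and gcd(k,B) | (ak/b + Ah). Set k' = k/gcd(k,B). Then the congruence ak/b + Ah + Bhn ≡ 0 (mod k) has a solution n ∈ ℤ which is unique modulo k'; consequently there exists n₀ ∈ {1, …, k'} with ζ_b^a ζ_k^{h(A + Bn₀)} = 1, and (ζ_b^a ζ_k^{hA}; ζ_k^{hB})_n = 0 for every n > n₀. -/

import Mathlib

open Complex Filter Finset

/-- `e2pi r = e^{2 π i r}`; thus `ζ_k^h = e2pi (h/k)`. -/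
noncomputable def e2pi (r : ℝ) : ℂ := Complex.exp (2 * Real.pi * Complex.I * r)

/-- The finite q-Pochhammer symbol `(a;q)_n = ∏_{j=0}^{n-1} (1 - a q^j)`. -/
noncomputable def qPoch (a q : ℂ) (n : ℕ) : ℂ := ∏ j ∈ Finset.range n, (1 - a * q ^ j)

/-- The infinite q-Pochhammer symbol `(a;q)_∞ = ∏_{j=0}^{∞} (1 - a q^j)`. -/
noncomputable def qPochInf (a q : ℂ) : ℂ := ∏' j : ℕ, (1 - a * q ^ j)

/-- The Jacobi triple product `j(x,q) = (x;q)_∞ (q/x;q)_∞ (q;q)_∞`. -/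
noncomputable def jac (x q : ℂ) : ℂ := qPochInf x q * qPochInf (q / x) q * qPochInf q q

/-- The universal mock theta function
`g₃(x,q) = ∑_{n≥1} q^{n(n-1)} / ((x;q)_n (q/x;q)_n)` (indexed here by `n+1`, `n : ℕ`). -/
noncomputable def g₃ (x q : ℂ) : ℂ :=
  ∑' n : ℕ, q ^ (n * (n + 1)) / (qPoch x q (n + 1) * qPoch (q / x) q (n + 1))

/-- `qrad h k t = ζ_k^h e^{-t}`. -/
noncomputable def qrad (h k : ℕ) (t : ℝ) : ℂ := e2pi ((h : ℝ) / k) * Real.exp (-t)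

/-- `srad h k B t = e^{π i h B / k} e^{-tB/2}`, a square root of `(qrad h k t)^B`. -/
noncomputable def srad (h k B : ℕ) (t : ℝ) : ℂ :=
  Complex.exp (Real.pi * Complex.I * ((h : ℝ) * B / k)) * Real.exp (-(t * B / 2))

/-- The Appell–Lerch sum `m(X,q,z)`. -/
noncomputable def appellM (X q z : ℂ) : ℂ :=
  (1 / jac z q) * ∑' n : ℤ, (-z) ^ n * q ^ ((n * (n - 1)) / 2) / (1 - X * z * q ^ (n - 1))

/-!
By Bézout, `c + m n ≡ 0 (mod k)` is solvable exactly when `gcd(k, m) ∣ c`, and its solutions form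
one class modulo `k / gcd(k, m)`; for `m = B h` with `h` a unit mod `k`, `gcd(k, m) = gcd(k, B)`.
With `c = a k / b + A h`, a solution `n₀` makes `a/b + h(A + B n₀)/k = (c + B h n₀)/k` an integer,
so `ζ_b^a ζ_k^{hA} (ζ_k^{hB})^{n₀} = 1` and the factor `j = n₀` of the q-Pochhammer symbol vanishes.
-/

namespace Int

theorem exists_add_mul_modEq_zero {k m c : ℤ} (hc : (k.gcd m : ℤ) ∣ c) :
    ∃ n, c + m * n ≡ 0 [ZMOD k] := by
  obtain ⟨t, rfl⟩ := hc
  refine ⟨-(k.gcdB m * t), Int.modEq_zero_iff_dvd.2 ⟨k.gcdA m * t, ?_⟩⟩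
  rw [Int.gcd_eq_gcd_ab]
  ring

theorem add_mul_modEq_zero_iff_modEq {k m c n x : ℤ} (hk : 0 < k)
    (hn : c + m * n ≡ 0 [ZMOD k]) :
    c + m * x ≡ 0 [ZMOD k] ↔ x ≡ n [ZMOD k / k.gcd m] := by
  have hmul : c + m * x ≡ 0 [ZMOD k] ↔ m * x ≡ m * n [ZMOD k] :=
    ⟨fun hx => (hx.trans hn.symm).add_left_cancel' c,
      fun hx => (hx.add_left c).trans hn⟩
  rw [hmul]
  refine ⟨Int.ModEq.cancel_left_div_gcd hk, fun hx => hx.mul_left'.of_dvd ?_⟩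
  exact ⟨m / k.gcd m, by
    rw [← Int.mul_ediv_assoc m (Int.gcd_dvd_left k m), mul_comm m k,
      Int.mul_ediv_assoc k (Int.gcd_dvd_right k m)]⟩

theorem exists_mem_Icc_modEq {N : ℕ} (hN : 0 < N) (n : ℤ) :
    ∃ n₀ ∈ Finset.Icc 1 N, (n₀ : ℤ) ≡ n [ZMOD N] := by
  have hN' : (0 : ℤ) < N := by exact_mod_cast hN
  have hlo := Int.emod_nonneg (n - 1) hN'.ne'
  have hhi := Int.emod_lt_of_pos (n - 1) hN'
  refine ⟨((n - 1) % N).toNat + 1, by rw [Finset.mem_Icc]; omega, ?_⟩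
  push_cast [Int.toNat_of_nonneg hlo]
  simpa using (Int.mod_modEq (n - 1) N).add_right 1

end Int

theorem e2pi_add (r s : ℝ) : e2pi (r + s) = e2pi r * e2pi s := by
  simp only [e2pi, ← Complex.exp_add]
  congr 1
  push_cast
  ring

theorem e2pi_pow (r : ℝ) (m : ℕ) : e2pi r ^ m = e2pi (m * r) := by
  rw [e2pi, e2pi, ← Complex.exp_nat_mul]
  congr 1
  push_cast
  ring

theorem e2pi_intCast (m : ℤ) : e2pi m = 1 := by
  rw [e2pi, show 2 * Real.pi * Complex.I * ((m : ℝ) : ℂ) = m * (2 * Real.pi * Complex.I) by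
    push_cast; ring, Complex.exp_int_mul_two_pi_mul_I]

theorem e2pi_div_eq_one {N k : ℤ} (h : k ∣ N) : e2pi (N / k) = 1 := by
  obtain ⟨t, rfl⟩ := h
  rcases eq_or_ne k 0 with rfl | hk
  · simpa using e2pi_intCast 0
  · rw [Int.cast_mul, mul_div_cancel_left₀ _ (Int.cast_ne_zero.2 hk), e2pi_intCast]

theorem qPoch_eq_zero_of_mul_pow_eq_one {a q : ℂ} {j n : ℕ} (hj : j < n) (h : a * q ^ j = 1) :
    qPoch a q n = 0 :=
  Finset.prod_eq_zero (Finset.mem_range.2 hj) (by rw [h, sub_self])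

theorem stmt9_general (a b A B : ℕ) (hb : 0 < b)
    (h k : ℕ) (hk : 0 < k) (hhk : Nat.gcd h k = 1)
    (hbk : b ∣ k) (hdvd : Nat.gcd k B ∣ (a * k / b + A * h)) :
    (∃ n : ℤ, ((a * k / b + A * h : ℕ) : ℤ) + (B : ℤ) * (h : ℤ) * n ≡ 0 [ZMOD (k : ℤ)] ∧
      ∀ m : ℤ, ((a * k / b + A * h : ℕ) : ℤ) + (B : ℤ) * (h : ℤ) * m ≡ 0 [ZMOD (k : ℤ)] →
        m ≡ n [ZMOD ((k / Nat.gcd k B : ℕ) : ℤ)]) ∧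
    ∃ n₀ ∈ Finset.Icc 1 (k / Nat.gcd k B),
      e2pi ((a : ℝ) / b) * e2pi ((h : ℝ) * ((A : ℝ) + (B : ℝ) * n₀) / k) = 1 ∧
      ∀ n : ℕ, n₀ < n →
        qPoch (e2pi ((a : ℝ) / b) * e2pi ((h : ℝ) * A / k)) (e2pi ((h : ℝ) * B / k)) n = 0 := by
  have hgcd : (k : ℤ).gcd ((B : ℤ) * h) = Nat.gcd k B := by
    rw [← Nat.cast_mul, Int.gcd_natCast_natCast,
      Nat.Coprime.gcd_mul_right_cancel_right B hhk]
  have hk' : ((k / Nat.gcd k B : ℕ) : ℤ) = k / (k : ℤ).gcd ((B : ℤ) * h) := by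
    rw [hgcd, Int.natCast_div]
  obtain ⟨n, hn⟩ := Int.exists_add_mul_modEq_zero
    (hgcd ▸ Int.natCast_dvd_natCast.2 hdvd : ((k : ℤ).gcd ((B : ℤ) * h) : ℤ) ∣ _)
  have hsol := fun x => Int.add_mul_modEq_zero_iff_modEq (x := x) (by exact_mod_cast hk) hn
  refine ⟨⟨n, hn, fun m hm => hk' ▸ (hsol m).1 hm⟩, ?_⟩
  obtain ⟨n₀, hn₀, hn₀n⟩ := Int.exists_mem_Icc_modEq
    (Nat.div_pos (Nat.le_of_dvd hk (Nat.gcd_dvd_left k B)) (Nat.gcd_pos_of_pos_left B hk)) n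
  have hroot : e2pi ((a : ℝ) / b) * e2pi ((h : ℝ) * ((A : ℝ) + (B : ℝ) * n₀) / k) = 1 := by
    have hdiv := Int.modEq_zero_iff_dvd.1 ((hsol n₀).2 (hk' ▸ hn₀n))
    rw [← e2pi_add, ← e2pi_div_eq_one hdiv]
    obtain ⟨e, rfl⟩ := hbk
    have he : (e : ℝ) ≠ 0 := by exact_mod_cast (Nat.pos_of_mul_pos_left hk).ne'
    congr 1
    rw [mul_left_comm, Nat.mul_div_cancel_left _ hb]
    push_cast
    field_simp
    ring
  refine ⟨n₀, hn₀, hroot, fun m hm => qPoch_eq_zero_of_mul_pow_eq_one hm ?_⟩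
  rw [e2pi_pow, mul_assoc, ← e2pi_add, ← hroot]
  congr 2
  ring

theorem stmt9 (a b A B : ℕ) (hb : 0 < b) (hBpos : 0 < B) (hab : Nat.gcd a b = 1)
    (h k : ℕ) (hk : 0 < k) (hhk : Nat.gcd h k = 1)
    (hbk : b ∣ k) (hdvd : Nat.gcd k B ∣ (a * k / b + A * h)) :
    (∃ n : ℤ, ((a * k / b + A * h : ℕ) : ℤ) + (B : ℤ) * (h : ℤ) * n ≡ 0 [ZMOD (k : ℤ)] ∧
      ∀ m : ℤ, ((a * k / b + A * h : ℕ) : ℤ) + (B : ℤ) * (h : ℤ) * m ≡ 0 [ZMOD (k : ℤ)] →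
        m ≡ n [ZMOD ((k / Nat.gcd k B : ℕ) : ℤ)]) ∧
    ∃ n₀ ∈ Finset.Icc 1 (k / Nat.gcd k B),
      e2pi ((a : ℝ) / b) * e2pi ((h : ℝ) * ((A : ℝ) + (B : ℝ) * n₀) / k) = 1 ∧
      ∀ n : ℕ, n₀ < n →
        qPoch (e2pi ((a : ℝ) / b) * e2pi ((h : ℝ) * A / k)) (e2pi ((h : ℝ) * B / k)) n = 0 :=
  stmt9_general a b A B hb h k hk hhk hbk hdvd
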